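/- Let A=(I,O,S,E) be an isADMG and let a∈O and b∈I∪O be distinct. The following are equivalent: (1) there is an S-inducing path from a to b in A; (2) there is an S-inducing walk from a to b in A; (3) for every Z⊆(I∪O)∖{a,b}, a is not id-separated from b given S∪Z in A; (4) a is not id-separated from b given S∪Z in A for Z=(I∪Anc_A({a,b}∪S))∖{a,b}. -/

import Mathlib

noncomputable section
open Classical

/-- Edge-endpoint marks: tail `−`, arrowhead `>`, or circle `∘`. -/
inductive Mark : Type
  | tail
  | arrow
  | circle
  deriving DecidableEq

/-- A mixed graph with input nodes over a node type `N`, as raw data.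
`mark a b` is the mark at `a` on the (unique) edge between `a` and `b`,
or `none` if there is no edge between `a` and `b`. -/
structure MixedGraph (N : Type) where
  inputs : Set N
  outputs : Set N
  mark : N → N → Option Mark

namespace MixedGraph

variable {N N' : Type}

/-- All nodes of the graph. -/
def nodes (G : MixedGraph N) : Set N := G.inputs ∪ G.outputs

/-- `a` and `b` are adjacent (joined by an edge). -/
def adj (G : MixedGraph N) (a b : N) : Prop := (G.mark a b).isSome

/-- Directed edge `a → b`: tail at `a`, arrowhead at `b`. -/
def dir (G : MixedGraph N) (a b : N) : Prop :=
  G.mark a b = some Mark.tail ∧ G.mark b a = some Mark.arrow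

/-- Bidirected edge `a ↔ b`. -/
def bidir (G : MixedGraph N) (a b : N) : Prop :=
  G.mark a b = some Mark.arrow ∧ G.mark b a = some Mark.arrow

/-- Undirected edge `a − b`. -/
def undir (G : MixedGraph N) (a b : N) : Prop :=
  G.mark a b = some Mark.tail ∧ G.mark b a = some Mark.tail

/-- Edge `a ∘→ b`: circle at `a`, arrowhead at `b`. -/
def circArrow (G : MixedGraph N) (a b : N) : Prop :=
  G.mark a b = some Mark.circle ∧ G.mark b a = some Mark.arrow

/-- Edge `a ∘−∘ b`: circles at both ends. -/
def circCirc (G : MixedGraph N) (a b : N) : Prop :=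
  G.mark a b = some Mark.circle ∧ G.mark b a = some Mark.circle

/-- Edge `a ∘− b`: circle at `a`, tail at `b`. -/
def circTail (G : MixedGraph N) (a b : N) : Prop :=
  G.mark a b = some Mark.circle ∧ G.mark b a = some Mark.tail

/-- Edge `a −∘ b`: tail at `a`, circle at `b`. -/
def tailCirc (G : MixedGraph N) (a b : N) : Prop :=
  G.mark a b = some Mark.tail ∧ G.mark b a = some Mark.circle

/-- Some edge of `G` carries an arrowhead at `a`. -/
def arrowAt (G : MixedGraph N) (a : N) : Prop :=
  ∃ b, G.mark a b = some Mark.arrow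

/-- `a` is an ancestor of `b`: `a = b` or a directed path `a → ⋯ → b` exists. -/
def anc (G : MixedGraph N) : N → N → Prop := Relation.ReflTransGen G.dir

/-- The ancestors of a set `S` of nodes. -/
def ancSet (G : MixedGraph N) (S : Set N) : Set N := {a | ∃ s ∈ S, G.anc a s}

/-- Potentially directed edge from `a` towards `b`: an edge with no arrowhead at its
earlier endpoint `a` and no tail at its later endpoint `b`. -/
def potDir (G : MixedGraph N) (a b : N) : Prop :=
  G.adj a b ∧ G.mark a b ≠ some Mark.arrow ∧ G.mark b a ≠ some Mark.tail

/-- `a` is a possible ancestor of `b`: `a = b` or a potentially directed path runs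
from `a` to `b`. -/
def poAn (G : MixedGraph N) : N → N → Prop := Relation.ReflTransGen G.potDir

/-- The possible ancestors of a set `S` of nodes. -/
def poAnSet (G : MixedGraph N) (S : Set N) : Set N := {a | ∃ s ∈ S, G.poAn a s}

/-- Well-formedness of a mixed graph with input nodes: inputs and outputs are disjoint
finite sets, edges are symmetric and irreflexive and join nodes of the graph. -/
def WF (G : MixedGraph N) : Prop :=
  Disjoint G.inputs G.outputs ∧ G.inputs.Finite ∧ G.outputs.Finite ∧
  (∀ a b, (G.mark a b).isSome → (G.mark b a).isSome) ∧
  (∀ a, G.mark a a = none) ∧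
  (∀ a b, (G.mark a b).isSome → a ∈ G.nodes ∧ b ∈ G.nodes)

/-- The induced subgraph of `G` over the node set `A`. -/
def induce (G : MixedGraph N) (A : Set N) : MixedGraph N where
  inputs := G.inputs ∩ A
  outputs := G.outputs ∩ A
  mark := fun a b => if a ∈ A ∧ b ∈ A then G.mark a b else none

/-- Transport a mixed graph over `N` to one over `N ⊕ N'` along `Sum.inl`. -/
def sumInl (G : MixedGraph N) : MixedGraph (N ⊕ N') where
  inputs := Sum.inl '' G.inputs
  outputs := Sum.inl '' G.outputs
  mark := fun x y =>
    match x, y with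
    | Sum.inl a, Sum.inl b => G.mark a b
    | _, _ => none

/-- `G` is a subgraph of `H`: its nodes and marked edges are among those of `H`. -/
def Subgraph (G H : MixedGraph N) : Prop :=
  G.inputs ⊆ H.inputs ∧ G.outputs ⊆ H.outputs ∧
  ∀ a b m, G.mark a b = some m → H.mark a b = some m

end MixedGraph

/-- A walk in `G` with `len` edges, visiting the nodes `f 0, …, f len`
(consecutive nodes are adjacent). -/
structure GWalk {N : Type} (G : MixedGraph N) where
  len : ℕ
  f : ℕ → N
  hadj : ∀ i < len, G.adj (f i) (f (i + 1))

namespace GWalk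

variable {N : Type} {G : MixedGraph N}

/-- The first node of the walk. -/
def first (w : GWalk G) : N := w.f 0

/-- The last node of the walk. -/
def last (w : GWalk G) : N := w.f w.len

/-- The walk is a path: no repeated nodes. -/
def IsPath (w : GWalk G) : Prop :=
  ∀ i ≤ w.len, ∀ j ≤ w.len, w.f i = w.f j → i = j

/-- The (interior) node at position `i` is a collider on the walk: both incident
edges carry arrowheads at it. -/
def ColliderAt (w : GWalk G) (i : ℕ) : Prop :=
  G.mark (w.f i) (w.f (i - 1)) = some Mark.arrow ∧
  G.mark (w.f i) (w.f (i + 1)) = some Mark.arrow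

end GWalk

namespace MixedGraph

variable {N : Type}

/-- `w` is an `(L,S)`-inducing walk: every non-endnode is in `L` or a collider, and
every collider lies in `Anc({first, last} ∪ S)`. -/
def InducingWalk (G : MixedGraph N) (L S : Set N) (w : GWalk G) : Prop :=
  (∀ i, 0 < i → i < w.len → w.f i ∈ L ∨ w.ColliderAt i) ∧
  (∀ i, 0 < i → i < w.len → w.ColliderAt i →
    w.f i ∈ G.ancSet ({w.first, w.last} ∪ S))

/-- There is an `(L,S)`-inducing walk from `a` to `b` in `G`. -/
def InducingWalkBtw (G : MixedGraph N) (L S : Set N) (a b : N) : Prop :=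
  ∃ w : GWalk G, w.first = a ∧ w.last = b ∧ G.InducingWalk L S w

/-- There is an `(L,S)`-inducing path from `a` to `b` in `G`. -/
def InducingPathBtw (G : MixedGraph N) (L S : Set N) (a b : N) : Prop :=
  ∃ w : GWalk G, w.IsPath ∧ w.first = a ∧ w.last = b ∧ G.InducingWalk L S w

/-- `G` is an iADMG: all edges directed or bidirected, no directed cycles, no
arrowheads at input nodes, and no edges between two input nodes. -/
def IsIADMG (G : MixedGraph N) : Prop :=
  G.WF ∧
  (∀ a b, G.adj a b → G.dir a b ∨ G.dir b a ∨ G.bidir a b) ∧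
  (∀ a b, G.dir a b → ¬ G.anc b a) ∧
  (∀ a ∈ G.inputs, ∀ b, G.mark a b ≠ some Mark.arrow) ∧
  (∀ a ∈ G.inputs, ∀ b ∈ G.inputs, ¬ G.adj a b)

/-- `G` is an iPAG. -/
def IsIPAG (G : MixedGraph N) : Prop :=
  G.WF ∧
  (∀ a ∈ G.inputs, ∀ b, G.mark a b ≠ some Mark.arrow) ∧
  (∀ a ∈ G.inputs, ∀ b ∈ G.inputs, ¬ G.adj a b) ∧
  (∀ a b, G.dir a b → ¬ G.anc b a) ∧
  (∀ a b, G.anc a b → ¬ G.bidir b a) ∧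
  (∀ a b c, G.mark b a = some Mark.arrow → ¬ G.undir b c) ∧
  (∀ a b, a ≠ b → a ∈ G.nodes → b ∈ G.nodes → ¬ G.adj a b →
    ¬ G.InducingPathBtw ∅ ∅ a b)

/-- `G` is an iMAG: an iPAG with no circle marks. -/
def IsIMAG (G : MixedGraph N) : Prop :=
  G.IsIPAG ∧ ∀ a b, G.mark a b ≠ some Mark.circle

/-- The visibility condition for a directed edge `a → b` of `G`: either `a` is an
input node, or some node `c` not adjacent to `b` satisfies `c *→ a`, or there is a
path `c *→ v₁ ↔ ⋯ ↔ v_{n−1} ↔ a` (`n ≥ 2`) with every `vᵢ` a parent of `b`. -/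
def VisibleCond (G : MixedGraph N) (a b : N) : Prop :=
  a ∈ G.inputs ∨
  ∃ c, c ≠ b ∧ ¬ G.adj c b ∧
    (G.mark a c = some Mark.arrow ∨
      ∃ w : GWalk G, w.IsPath ∧ 2 ≤ w.len ∧ w.first = c ∧ w.last = a ∧
        G.mark (w.f 1) (w.f 0) = some Mark.arrow ∧
        (∀ i, 1 ≤ i → i < w.len → G.bidir (w.f i) (w.f (i + 1))) ∧
        (∀ i, 1 ≤ i → i < w.len → G.dir (w.f i) b))

/-- `a → b` is a visible directed edge of `G`. -/
def VisibleDir (G : MixedGraph N) (a b : N) : Prop :=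
  G.dir a b ∧ G.VisibleCond a b

/-- `a` and `b` are in the same bucket of `G`: some path between them carries no
arrowhead mark on any of its edges. -/
def SameBucket (G : MixedGraph N) (a b : N) : Prop :=
  ∃ w : GWalk G, w.IsPath ∧ w.first = a ∧ w.last = b ∧
    ∀ i < w.len, G.mark (w.f i) (w.f (i + 1)) ≠ some Mark.arrow ∧
      G.mark (w.f (i + 1)) (w.f i) ≠ some Mark.arrow

end MixedGraph

/-- An isADMG: an iADMG together with its set `sel` of latent selection nodes.
The observed output nodes are `graph.outputs \ sel`. -/
structure SADMG (N : Type) where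
  graph : MixedGraph N
  sel : Set N

namespace SADMG

/-- Well-formedness of an isADMG. -/
def WF {N : Type} (A : SADMG N) : Prop :=
  A.graph.IsIADMG ∧ A.sel ⊆ A.graph.outputs

/-- The observed output nodes `O`. -/
def obs {N : Type} (A : SADMG N) : Set N := A.graph.outputs \ A.sel

end SADMG

/-- An ilsADMG: an iADMG together with its sets of latent output nodes and of
latent selection nodes.  The observed output nodes are the remaining outputs. -/
structure LSADMG (N : Type) where
  graph : MixedGraph N
  latent : Set N
  sel : Set N

namespace LSADMG

/-- Well-formedness of an ilsADMG. -/
def WF {N : Type} (A : LSADMG N) : Prop :=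
  A.graph.IsIADMG ∧ A.latent ⊆ A.graph.outputs ∧ A.sel ⊆ A.graph.outputs ∧
  Disjoint A.latent A.sel

/-- The observed output nodes `O`. -/
def obs {N : Type} (A : LSADMG N) : Set N := A.graph.outputs \ (A.latent ∪ A.sel)

end LSADMG

/-- An iPAG/iMAG `P` represents the isADMG `A`: nodes match; adjacency in `P`
corresponds exactly to `S`-inducing paths in `A` (with no edges inside the inputs);
arrowheads at `a` imply `a ∉ Anc_A({b} ∪ S)`; tails at `a` imply `a ∈ Anc_A({b} ∪ S)`. -/
def RepresentsS {N : Type} (P : MixedGraph N) (A : SADMG N) : Prop :=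
  P.inputs = A.graph.inputs ∧
  P.outputs = A.obs ∧
  (∀ a b, a ≠ b → a ∈ P.nodes → b ∈ P.nodes →
    (P.adj a b ↔
      (¬(a ∈ P.inputs ∧ b ∈ P.inputs) ∧ A.graph.InducingPathBtw ∅ A.sel a b))) ∧
  (∀ a b, P.mark a b = some Mark.arrow → a ∉ A.graph.ancSet ({b} ∪ A.sel)) ∧
  (∀ a b, P.mark a b = some Mark.tail → a ∈ A.graph.ancSet ({b} ∪ A.sel))

/-- An iPAG/iMAG `P` `(L,S)`-represents the ilsADMG `A`. -/
def RepresentsLS {N : Type} (P : MixedGraph N) (A : LSADMG N) : Prop :=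
  P.inputs = A.graph.inputs ∧
  P.outputs = A.obs ∧
  (∀ a b, a ≠ b → a ∈ P.nodes → b ∈ P.nodes →
    (P.adj a b ↔
      (¬(a ∈ P.inputs ∧ b ∈ P.inputs) ∧ A.graph.InducingPathBtw A.latent A.sel a b))) ∧
  (∀ a b, P.mark a b = some Mark.arrow → a ∉ A.graph.ancSet ({b} ∪ A.sel)) ∧
  (∀ a b, P.mark a b = some Mark.tail → a ∈ A.graph.ancSet ({b} ∪ A.sel))

/-- The explicit candidate for `MAG(A)` of an ilsADMG `A`: input nodes `I`, output
nodes `O`; distinct `a,b ∈ I ∪ O` adjacent iff `{a,b} ⊄ I` and there is an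
`(L,S)`-inducing path between them in `A`; the mark at `a` on each edge is a tail
if `a ∈ Anc_A({b} ∪ S)` and an arrowhead otherwise. -/
def magOfLS {N : Type} (A : LSADMG N) : MixedGraph N where
  inputs := A.graph.inputs
  outputs := A.obs
  mark := fun a b =>
    if a ≠ b ∧ a ∈ A.graph.inputs ∪ A.obs ∧ b ∈ A.graph.inputs ∪ A.obs ∧
        ¬(a ∈ A.graph.inputs ∧ b ∈ A.graph.inputs) ∧
        A.graph.InducingPathBtw A.latent A.sel a b then
      (if a ∈ A.graph.ancSet ({b} ∪ A.sel) then some Mark.tail else some Mark.arrow)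
    else none

/-- A walk is `C`-open (in a graph without circle marks): its endnodes are not in
`C`, no non-collider on it is in `C`, and every collider on it is in `Anc(C)`. -/
def COpen {N : Type} (H : MixedGraph N) (C : Set N) (w : GWalk H) : Prop :=
  w.first ∉ C ∧ w.last ∉ C ∧
  ∀ i, 0 < i → i < w.len →
    (¬ w.ColliderAt i → w.f i ∉ C) ∧ (w.ColliderAt i → w.f i ∈ H.ancSet C)

/-- `A` is id-separated from `B` given `C` in `H` (graphs without circle marks):
every path/walk from a node of `A` to a node of `B ∪ inputs` is not `C`-open. -/
def IdSepSimple {N : Type} (H : MixedGraph N) (A B C : Set N) : Prop :=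
  ∀ w : GWalk H, w.first ∈ A → w.last ∈ B ∪ H.inputs → ¬ COpen H C w

/-- A walk in a manipulated graph `H` (with set `DI` of regime input nodes) is
`C`-id-open. -/
def IdOpen {N : Type} (H : MixedGraph N) (DI C : Set N) (w : GWalk H) : Prop :=
  w.first ∉ C ∧ w.last ∉ C ∧
  ∀ i, 0 < i → i < w.len →
    (w.f i ∉ C ∧ (H.mark (w.f i) (w.f (i - 1)) = some Mark.tail ∨
        H.mark (w.f i) (w.f (i + 1)) = some Mark.tail)) ∨
    (w.f i ∉ C ∧ H.mark (w.f i) (w.f (i - 1)) = some Mark.circle ∧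
        H.mark (w.f i) (w.f (i + 1)) = some Mark.circle ∧
        ¬ H.adj (w.f (i - 1)) (w.f (i + 1))) ∨
    (w.ColliderAt i ∧ w.f (i - 1) ∉ DI ∧ w.f i ∉ DI ∧ w.f (i + 1) ∉ DI ∧
        w.f i ∈ H.ancSet C) ∨
    (w.ColliderAt i ∧ ¬(w.f (i - 1) ∉ DI ∧ w.f i ∉ DI ∧ w.f (i + 1) ∉ DI) ∧
        w.f i ∈ H.poAnSet (C ∩ H.outputs)) ∨
    (w.f (i - 1) ∈ DI ∧ H.mark (w.f i) (w.f (i - 1)) = some Mark.circle ∧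
        H.mark (w.f i) (w.f (i + 1)) = some Mark.arrow ∧
        w.f i ∈ H.poAnSet (C ∩ H.outputs)) ∨
    (w.f (i + 1) ∈ DI ∧ H.mark (w.f i) (w.f (i - 1)) = some Mark.arrow ∧
        H.mark (w.f i) (w.f (i + 1)) = some Mark.circle ∧
        w.f i ∈ H.poAnSet (C ∩ H.outputs))

/-- `A` is id-separated from `B` given `C` in the manipulated graph `H`, whose set
of regime input nodes is `DI`: every path/walk from a node of `A` to a node of
`B ∪ inputs` is not `C`-id-open. -/
def IdSep {N : Type} (H : MixedGraph N) (DI A B C : Set N) : Prop :=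
  ∀ w : GWalk H, w.first ∈ A → w.last ∈ B ∪ H.inputs → ¬ IdOpen H DI C w

/-- Hard manipulation `do(T)` of an isADMG-type graph: reclassify the nodes of `T`
as input nodes and delete every edge with an arrowhead at a node of `T`. -/
def admgHardManip {N : Type} (G : MixedGraph N) (T : Set N) : MixedGraph N where
  inputs := G.inputs ∪ (T ∩ G.outputs)
  outputs := G.outputs \ T
  mark := fun x y =>
    if (x ∈ T ∧ G.mark x y = some Mark.arrow) ∨
        (y ∈ T ∧ G.mark y x = some Mark.arrow) then none
    else G.mark x y

/-- Soft manipulation `do(I_D)` of an isADMG-type graph: add a fresh input node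
`I_d = Sum.inr d` and the directed edge `I_d → d` for each `d ∈ D`. -/
def admgSoftManip {N : Type} (G : MixedGraph N) (D : Set N) : MixedGraph (N ⊕ N) where
  inputs := Sum.inl '' G.inputs ∪ Sum.inr '' D
  outputs := Sum.inl '' G.outputs
  mark := fun x y =>
    match x, y with
    | Sum.inl a, Sum.inl b => G.mark a b
    | Sum.inr d, Sum.inl a => if d ∈ D ∧ a = d then some Mark.tail else none
    | Sum.inl a, Sum.inr d => if d ∈ D ∧ a = d then some Mark.arrow else none
    | Sum.inr _, Sum.inr _ => none

/-- Soft manipulation of an isADMG. -/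
def SADMG.softManip {N : Type} (A : SADMG N) (D : Set N) : SADMG (N ⊕ N) where
  graph := admgSoftManip A.graph D
  sel := Sum.inl '' A.sel

/-- Hard manipulation `do(T)` of an iMAG-type graph: input nodes `I ∪ (T ∩ V)`,
output nodes `V \ T`; delete all edges with an arrowhead at a node of `T \ I` and
all edges between two nodes of `T ∪ I`. -/
def magHardManip {N : Type} (G : MixedGraph N) (T : Set N) : MixedGraph N where
  inputs := G.inputs ∪ (T ∩ G.outputs)
  outputs := G.outputs \ T
  mark := fun x y =>
    if (x ∈ T ∧ x ∉ G.inputs ∧ G.mark x y = some Mark.arrow) ∨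
        (y ∈ T ∧ y ∉ G.inputs ∧ G.mark y x = some Mark.arrow) ∨
        ((x ∈ T ∨ x ∈ G.inputs) ∧ (y ∈ T ∨ y ∈ G.inputs)) then none
    else G.mark x y

/-- The mark at node `y` on the new edge between the regime node `I_a = Sum.inr a`
and `y` in the soft manipulation of an iMAG-type graph `G` over `N ⊕ N`
(`none` if there is no such edge): `I_a → a` if some edge of `G` has an arrowhead
at `a`; `I_a − a` if some undirected edge is at `a`; `I_a −∘ a` otherwise;
`I_a → b` for every output `b` with `a → b` invisible; `I_a − b` for every output
`b` with `a − b` in `G`. -/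
def magSoftTarget {N : Type} (G : MixedGraph (N ⊕ N)) (a : N) (y : N ⊕ N) : Option Mark :=
  if y = Sum.inl a then
    (if G.arrowAt (Sum.inl a) then some Mark.arrow
     else if ∃ c, G.undir (Sum.inl a) c then some Mark.tail
     else some Mark.circle)
  else if y ∈ G.outputs ∧ G.dir (Sum.inl a) y ∧ ¬ G.VisibleCond (Sum.inl a) y then
    some Mark.arrow
  else if y ∈ G.outputs ∧ G.undir (Sum.inl a) y then some Mark.tail
  else none

/-- The mark at node `y` on the new edge between the regime node `I_a = Sum.inr a`
and `y` in the soft manipulation of an iPAG-type graph `G` over `N ⊕ N`. -/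
def pagSoftTarget {N : Type} (G : MixedGraph (N ⊕ N)) (a : N) (y : N ⊕ N) : Option Mark :=
  if y = Sum.inl a then
    (if G.arrowAt (Sum.inl a) then some Mark.arrow
     else if ∃ c, G.undir (Sum.inl a) c then some Mark.tail
     else some Mark.circle)
  else if y ∈ G.outputs ∧ ((G.dir (Sum.inl a) y ∧ ¬ G.VisibleCond (Sum.inl a) y) ∨
      G.circArrow (Sum.inl a) y) then some Mark.arrow
  else if y ∈ G.outputs ∧ (G.undir (Sum.inl a) y ∨
      (G.circTail (Sum.inl a) y ∧ ∃ c, G.undir c y)) then some Mark.tail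
  else if y ∈ G.outputs ∧ (G.tailCirc (Sum.inl a) y ∨ G.circCirc (Sum.inl a) y ∨
      (G.circTail (Sum.inl a) y ∧ ¬ ∃ c, G.undir c y)) then some Mark.circle
  else none

/-- Generic soft-manipulation step on a graph over `N ⊕ N`: for each `a ∈ A` not
already an input, the regime node `I_a = Sum.inr a` is added as an input node,
with edges (and end marks) prescribed by `target`; the mark at `I_a` on each new
edge is a tail. -/
def softManipStep {N : Type}
    (target : MixedGraph (N ⊕ N) → N → (N ⊕ N) → Option Mark)
    (G : MixedGraph (N ⊕ N)) (A : Set N) : MixedGraph (N ⊕ N) where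
  inputs := G.inputs ∪ Sum.inr '' {a | a ∈ A ∧ Sum.inl a ∉ G.inputs}
  outputs := G.outputs
  mark := fun x y =>
    match x, y with
    | Sum.inr a, Sum.inr b =>
        if a ∈ A ∧ Sum.inl a ∉ G.inputs then
          (if (target G a (Sum.inr b)).isSome then some Mark.tail else none)
        else if b ∈ A ∧ Sum.inl b ∉ G.inputs then target G b (Sum.inr a)
        else G.mark x y
    | Sum.inr a, Sum.inl v =>
        if a ∈ A ∧ Sum.inl a ∉ G.inputs then
          (if (target G a (Sum.inl v)).isSome then some Mark.tail else none)
        else G.mark x y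
    | Sum.inl v, Sum.inr a =>
        if a ∈ A ∧ Sum.inl a ∉ G.inputs then target G a (Sum.inl v)
        else G.mark x y
    | Sum.inl _, Sum.inl _ => G.mark x y

/-- Soft-manipulation step for iMAG-type graphs over `N ⊕ N`. -/
def magSoftManipStep {N : Type} (G : MixedGraph (N ⊕ N)) (A : Set N) :
    MixedGraph (N ⊕ N) :=
  softManipStep magSoftTarget G A

/-- The soft-manipulated iMAG `M_{do(I_A)}`, over node type `N ⊕ N`. -/
def magSoftManip {N : Type} (M : MixedGraph N) (A : Set N) : MixedGraph (N ⊕ N) :=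
  magSoftManipStep M.sumInl A

/-- The soft-manipulated iPAG `P_{do(I_A)}`, over node type `N ⊕ N`. -/
def pagSoftManip {N : Type} (P : MixedGraph N) (A : Set N) : MixedGraph (N ⊕ N) :=
  softManipStep pagSoftTarget P.sumInl A

/-- Hard manipulation `do(T)` of an iPAG-type graph: as for iMAGs, but in addition
every remaining circle mark at a manipulated node is replaced by a tail. -/
def pagHardManip {N : Type} (G : MixedGraph N) (T : Set N) : MixedGraph N where
  inputs := G.inputs ∪ T
  outputs := G.outputs \ T
  mark := fun x y =>
    if (x ∈ T ∧ x ∉ G.inputs ∧ G.mark x y = some Mark.arrow) ∨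
        (y ∈ T ∧ y ∉ G.inputs ∧ G.mark y x = some Mark.arrow) ∨
        ((x ∈ T ∨ x ∈ G.inputs) ∧ (y ∈ T ∨ y ∈ G.inputs)) then none
    else if x ∈ T ∧ x ∉ G.inputs ∧ y ∈ G.outputs ∧ y ∉ T ∧
        G.mark x y = some Mark.circle then some Mark.tail
    else G.mark x y

/-- Orient all circle marks of `G` as tails. -/
def orientCirclesTails {N : Type} (G : MixedGraph N) : MixedGraph N :=
  { G with
    mark := fun x y =>
      (G.mark x y).map (fun m => if m = Mark.circle then Mark.tail else m) }

/-- There is a pc-connecting path from `a` to `b` in `G`: a single edge between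
`a` and `b` that is not a visible directed edge, or a path
`a *→ v₁ ↔ ⋯ ↔ v_{n−1} ←* b` (`n > 1`) none of whose edges is visible directed. -/
def PcConn {N : Type} (G : MixedGraph N) (a b : N) : Prop :=
  (G.adj a b ∧ ¬ G.VisibleDir a b ∧ ¬ G.VisibleDir b a) ∨
  (∃ w : GWalk G, w.IsPath ∧ 1 < w.len ∧ w.first = a ∧ w.last = b ∧
    G.mark (w.f 1) (w.f 0) = some Mark.arrow ∧
    G.mark (w.f (w.len - 1)) (w.f w.len) = some Mark.arrow ∧
    (∀ i, 1 ≤ i → i < w.len - 1 → G.bidir (w.f i) (w.f (i + 1))) ∧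
    (∀ i < w.len, ¬ G.VisibleDir (w.f i) (w.f (i + 1)) ∧
      ¬ G.VisibleDir (w.f (i + 1)) (w.f i)))

/-- The pc-component of `b` in `G`. -/
def pcSet {N : Type} (G : MixedGraph N) (b : N) : Set N := {a | PcConn G a b}

/-- The region of a set `B` in `G`: all nodes in the bucket of some node
pc-connected to a node of `B`. -/
def regionSet {N : Type} (G : MixedGraph N) (B : Set N) : Set N :=
  {a | ∃ b ∈ B, ∃ c, PcConn G c b ∧ G.SameBucket a c}

/-- `S` is a bucket of `G`. -/
def IsBucket {N : Type} (G : MixedGraph N) (S : Set N) : Prop :=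
  ∃ a ∈ G.nodes, S = {x | G.SameBucket x a}

/-- FCI rule R1 (closure form): if `k *→ j` with the edge between `j` and `i`
carrying a circle at `j`, `i` and `k` non-adjacent and `i` not an input node,
then that edge is `j → i`. -/
def FciR1 {N : Type} (P : MixedGraph N) : Prop :=
  ∀ i j k, P.mark j k = some Mark.arrow → ¬ P.adj i k → i ∉ P.inputs →
    P.mark j i = some Mark.circle → P.dir j i

/-- FCI rule R2 (closure form): if `i → j *→ k` or `i *→ j → k` with the edge
between `i` and `k` carrying a circle at `k`, then that edge has an arrowhead at `k`. -/
def FciR2 {N : Type} (P : MixedGraph N) : Prop :=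
  ∀ i j k, ((P.dir i j ∧ P.mark k j = some Mark.arrow) ∨
      (P.mark j i = some Mark.arrow ∧ P.dir j k)) →
    P.mark k i = some Mark.circle → P.mark k i = some Mark.arrow

/-- FCI rule R4 (closure form): for every discriminating path `⟨a,…,y,z⟩` for `y`,
the mark at `y` on the edge between `y` and `z` is not a circle. -/
def FciR4 {N : Type} (P : MixedGraph N) : Prop :=
  ∀ w : GWalk P, w.IsPath → 3 ≤ w.len → ¬ P.adj (w.f 0) (w.f w.len) →
    (∀ i, 0 < i → i < w.len - 1 → w.ColliderAt i ∧ P.dir (w.f i) (w.f w.len)) →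
    P.mark (w.f (w.len - 1)) (w.f w.len) ≠ some Mark.circle

/-- Property (P2) of iSOPAGs: no `a *→ b` together with `b −∘ c`, and no
`a *→ b` together with `b ∘− c`. -/
def SopagP2 {N : Type} (P : MixedGraph N) : Prop :=
  ∀ a b c, P.mark b a = some Mark.arrow → ¬ P.tailCirc b c ∧ ¬ P.circTail b c

/-- Property (P3) of iSOPAGs: if `a *→ b` and the edge between `b` and `c` has a
circle at `b`, then `a *→ c`. -/
def SopagP3 {N : Type} (P : MixedGraph N) : Prop :=
  ∀ a b c, P.mark b a = some Mark.arrow → P.mark b c = some Mark.circle →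
    P.mark c a = some Mark.arrow

/-- `P` is an iSOPAG: an iPAG representing some isADMG, closed under the FCI
orientation rules (R1, R2, R4), and satisfying (P2) and (P3). -/
def IsISOPAG {N : Type} (P : MixedGraph N) : Prop :=
  P.IsIPAG ∧ (∃ A : SADMG N, A.WF ∧ RepresentsS P A) ∧
  FciR1 P ∧ FciR2 P ∧ FciR4 P ∧ SopagP2 P ∧ SopagP3 P


/-! (1) ⇒ (2) is trivial, and since every interior node of an `S`-inducing walk is a collider,
cutting out closed sub-walks turns it into an `S`-inducing path.

(2) ⇒ (3): with `C = S ∪ Z`, colliders of an inducing walk lying in `Anc S` are `C`-open. If a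
collider `v` lies only in `Anc a \ Anc C`, cut the walk at the last such collider and reach it
from `a` along the reversed directed path `v → ⋯ → a`: its nodes are descendants of `v`, hence
outside `Anc C`, and they are non-colliders. Repeating this at `b` gives a `C`-open walk.

(4) ⇒ (2): an open walk from `a` ends at `b`, because every other input lies in the conditioning
set `C`; we may assume it does not revisit `a` or `b`. Its colliders lie in `Anc C \ I`, which is
contained in `T = Anc({a,b} ∪ S)`. Leaving a non-collider along its tail, the walk follows
directed edges until it reaches a collider or an endpoint, so the non-collider lies in `T` as well,
hence in `C`: impossible on an open walk. So the walk is `S`-inducing. -/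

namespace GWalk

variable {N : Type} {G : MixedGraph N}

def InteriorAll (w : GWalk G) (P : N → N → N → Prop) : Prop :=
  ∀ t, 0 < t → t < w.len → P (w.f (t - 1)) (w.f t) (w.f (t + 1))

theorem InteriorAll.mono {w : GWalk G} {P Q : N → N → N → Prop}
    (h : ∀ u v x, P u v x → Q u v x) (hw : w.InteriorAll P) : w.InteriorAll Q :=
  fun t h₀ h₁ => h _ _ _ (hw t h₀ h₁)

def edge {u v : N} (h : G.adj u v) : GWalk G where
  len := 1
  f t := if t = 0 then u else v
  hadj t ht := by
    obtain rfl : t = 0 := by omega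
    simpa using h

theorem interiorAll_edge {u v : N} (h : G.adj u v) (P : N → N → N → Prop) :
    (edge h).InteriorAll P :=
  fun t h₀ h₁ => absurd h₁ (by simp [edge]; omega)

def append (w₁ w₂ : GWalk G) (h : w₁.last = w₂.first) : GWalk G where
  len := w₁.len + w₂.len
  f t := if t ≤ w₁.len then w₁.f t else w₂.f (t - w₁.len)
  hadj t ht := by
    rcases lt_trichotomy t w₁.len with h' | rfl | h'
    · simpa [h'.le, Nat.succ_le_of_lt h'] using w₁.hadj t h'
    · have h0 : w₁.f w₁.len = w₂.f 0 := h
      simpa [h0] using w₂.hadj 0 (by omega)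
    · simpa [h'.not_ge, show ¬ t + 1 ≤ w₁.len by omega, show t + 1 - w₁.len = t - w₁.len + 1
        by omega] using w₂.hadj (t - w₁.len) (by omega)

section append

variable {w₁ w₂ : GWalk G} (h : w₁.last = w₂.first)

theorem append_f_of_le {t : ℕ} (ht : t ≤ w₁.len) : (append w₁ w₂ h).f t = w₁.f t :=
  if_pos ht

theorem append_f_add (t : ℕ) : (append w₁ w₂ h).f (w₁.len + t) = w₂.f t := by
  rcases Nat.eq_zero_or_pos t with rfl | ht
  · exact (append_f_of_le h le_rfl).trans h
  · exact (if_neg (by omega)).trans (by simp)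

@[simp] theorem append_len : (append w₁ w₂ h).len = w₁.len + w₂.len := rfl

@[simp] theorem append_first : (append w₁ w₂ h).first = w₁.first :=
  append_f_of_le h (Nat.zero_le _)

@[simp] theorem append_last : (append w₁ w₂ h).last = w₂.last :=
  append_f_add h w₂.len

theorem InteriorAll.append {P : N → N → N → Prop} (h₁ : w₁.InteriorAll P)
    (h₂ : w₂.InteriorAll P)
    (hjoin : 0 < w₁.len → 0 < w₂.len → P (w₁.f (w₁.len - 1)) w₁.last (w₂.f 1)) :
    (append w₁ w₂ h).InteriorAll P := by
  intro t ht₀ ht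
  simp only [append_len] at ht
  rcases lt_trichotomy t w₁.len with hlt | rfl | hgt
  · rw [append_f_of_le h (by omega), append_f_of_le h hlt.le, append_f_of_le h hlt]
    exact h₁ t ht₀ hlt
  · rw [append_f_of_le h (by omega), append_f_of_le h le_rfl, append_f_add h 1]
    exact hjoin ht₀ (by omega)
  · obtain ⟨s, rfl⟩ : ∃ s, t = w₁.len + s := ⟨t - w₁.len, by omega⟩
    rw [show w₁.len + s - 1 = w₁.len + (s - 1) by omega, add_assoc, append_f_add,
      append_f_add, append_f_add]
    exact h₂ s (by omega) (by omega)

end append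

def take (w : GWalk G) (n : ℕ) (hn : n ≤ w.len) : GWalk G :=
  ⟨n, w.f, fun t ht => w.hadj t (by omega)⟩

@[simp] theorem take_len (w : GWalk G) {n : ℕ} (hn : n ≤ w.len) : (w.take n hn).len = n := rfl

@[simp] theorem take_first (w : GWalk G) {n : ℕ} (hn : n ≤ w.len) :
    (w.take n hn).first = w.first := rfl

@[simp] theorem take_last (w : GWalk G) {n : ℕ} (hn : n ≤ w.len) :
    (w.take n hn).last = w.f n := rfl

theorem InteriorAll.take {w : GWalk G} {P : N → N → N → Prop} (hw : w.InteriorAll P)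
    {n : ℕ} (hn : n ≤ w.len) : (w.take n hn).InteriorAll P :=
  fun t h₀ h₁ => hw t h₀ (by simp at h₁; omega)

def drop (w : GWalk G) (n : ℕ) : GWalk G :=
  ⟨w.len - n, fun t => w.f (n + t), fun t ht => w.hadj (n + t) (by omega)⟩

@[simp] theorem drop_len (w : GWalk G) (n : ℕ) : (w.drop n).len = w.len - n := rfl

theorem drop_f (w : GWalk G) (n t : ℕ) : (w.drop n).f t = w.f (n + t) := rfl

@[simp] theorem drop_first (w : GWalk G) (n : ℕ) : (w.drop n).first = w.f n := rfl

@[simp] theorem drop_last (w : GWalk G) {n : ℕ} (hn : n ≤ w.len) :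
    (w.drop n).last = w.last := by
  simp only [last, drop_f, drop_len, Nat.add_sub_cancel' hn]

theorem interiorAll_drop {w : GWalk G} {P : N → N → N → Prop} {n : ℕ}
    (hw : ∀ t, n < t → t < w.len → P (w.f (t - 1)) (w.f t) (w.f (t + 1))) :
    (w.drop n).InteriorAll P := by
  intro t h₀ h₁
  simp only [drop_len, drop_f] at h₁ ⊢
  rw [show n + (t - 1) = n + t - 1 by omega]
  exact hw (n + t) (by omega) (by omega)

theorem InteriorAll.drop {w : GWalk G} {P : N → N → N → Prop} (hw : w.InteriorAll P)
    (n : ℕ) : (w.drop n).InteriorAll P :=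
  interiorAll_drop fun t ht₀ ht₁ => hw t (by omega) ht₁

def reverse (w : GWalk G) (hsymm : ∀ u v, G.adj u v → G.adj v u) : GWalk G where
  len := w.len
  f t := w.f (w.len - t)
  hadj t ht := by
    have := hsymm _ _ (w.hadj (w.len - (t + 1)) (by omega))
    rwa [show w.len - (t + 1) + 1 = w.len - t by omega] at this

section reverse

variable {w : GWalk G} (hsymm : ∀ u v, G.adj u v → G.adj v u)

@[simp] theorem reverse_len : (w.reverse hsymm).len = w.len := rfl

@[simp] theorem reverse_first : (w.reverse hsymm).first = w.last := by
  simp [first, last, reverse]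

@[simp] theorem reverse_last : (w.reverse hsymm).last = w.first := by
  simp [first, last, reverse]

theorem InteriorAll.reverse {P : N → N → N → Prop} (hw : w.InteriorAll P) :
    (w.reverse hsymm).InteriorAll fun u v x => P x v u := by
  intro t h₀ h₁
  simp only [GWalk.reverse] at h₁ ⊢
  have := hw (w.len - t) (by omega) (by omega)
  rwa [show w.len - t - 1 = w.len - (t + 1) by omega,
    show w.len - t + 1 = w.len - (t - 1) by omega] at this

end reverse

theorem exists_interiorAll_ne_endpoints {P : N → N → N → Prop} (w : GWalk G)
    (hw : w.InteriorAll P) :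
    ∃ w' : GWalk G, w'.first = w.first ∧ w'.last = w.last ∧ w'.InteriorAll P ∧
      ∀ t, 0 < t → t < w'.len → w'.f t ≠ w'.first ∧ w'.f t ≠ w'.last := by
  induction hn : w.len using Nat.strong_induction_on generalizing w with
  | _ n ih =>
  by_cases hfirst : ∃ t, 0 < t ∧ t < w.len ∧ w.f t = w.first
  · obtain ⟨t, ht₀, ht, heq⟩ := hfirst
    obtain ⟨w', h₀, h₁, hw'⟩ := ih _ (by simp; omega) (w.drop t) (hw.drop t) rfl
    exact ⟨w', by simpa [heq] using h₀, by simpa [ht.le] using h₁, hw'⟩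
  by_cases hlast : ∃ t, 0 < t ∧ t < w.len ∧ w.f t = w.last
  · obtain ⟨t, ht₀, ht, heq⟩ := hlast
    obtain ⟨w', h₀, h₁, hw'⟩ := ih _ (by simp; omega) (w.take t ht.le) (hw.take ht.le) rfl
    exact ⟨w', by simpa using h₀, by simpa [heq] using h₁, hw'⟩
  push Not at hfirst hlast
  exact ⟨w, rfl, rfl, hw, fun t h₀ h₁ => ⟨hfirst t h₀ h₁, hlast t h₀ h₁⟩⟩

theorem exists_isPath_interiorAll {P : N → N → N → Prop}
    (hP : ∀ u v x u' x', P u v x → P u' v x' → P u v x') (w : GWalk G)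
    (hw : w.InteriorAll P) :
    ∃ w' : GWalk G, w'.IsPath ∧ w'.first = w.first ∧ w'.last = w.last ∧ w'.InteriorAll P := by
  induction hn : w.len using Nat.strong_induction_on generalizing w with
  | _ n ih =>
  by_cases hpath : w.IsPath
  · exact ⟨w, hpath, rfl, rfl, hw⟩
  obtain ⟨i, j, hij, hj, heq⟩ : ∃ i j, i < j ∧ j ≤ w.len ∧ w.f i = w.f j := by
    simp only [IsPath, not_forall] at hpath
    obtain ⟨i, hi, j, hj, heq, hne⟩ := hpath
    rcases Nat.lt_or_gt_of_ne hne with h | h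
    · exact ⟨i, j, h, hj, heq⟩
    · exact ⟨j, i, h, hi, heq.symm⟩
  have hjoin : (w.take i (by omega)).last = (w.drop j).first := heq
  have hPjoin (hi : 0 < i) (hj' : 0 < w.len - j) :
      P (w.f (i - 1)) (w.f i) (w.f (j + 1)) := by
    have hPj := hw j (by omega) (by omega)
    rw [← heq] at hPj
    exact hP _ _ _ _ _ (hw i hi (by omega)) hPj
  obtain ⟨w', hpath', h₀, h₁, hw'⟩ := ih _ (by simp; omega) (append _ _ hjoin)
    ((hw.take _).append hjoin (hw.drop j) hPjoin) rfl
  exact ⟨w', hpath', by simpa using h₀, by simpa [hj] using h₁, hw'⟩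

end GWalk

namespace MixedGraph

variable {N : Type} {G : MixedGraph N}

def IsCollider (G : MixedGraph N) (u v x : N) : Prop :=
  G.mark v u = some Mark.arrow ∧ G.mark v x = some Mark.arrow

theorem isCollider_comm {u v x : N} : G.IsCollider u v x ↔ G.IsCollider x v u := and_comm

def OpenTriple (G : MixedGraph N) (C : Set N) (u v x : N) : Prop :=
  (¬ G.IsCollider u v x → v ∉ C) ∧ (G.IsCollider u v x → v ∈ G.ancSet C)

theorem openTriple_comm {C : Set N} {u v x : N} :
    G.OpenTriple C u v x ↔ G.OpenTriple C x v u := by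
  simp only [OpenTriple, isCollider_comm]

theorem openTriple_of_isCollider {C : Set N} {u v x : N} (hc : G.IsCollider u v x)
    (hv : v ∈ G.ancSet C) : G.OpenTriple C u v x :=
  ⟨fun hnc => absurd hc hnc, fun _ => hv⟩

theorem openTriple_of_mark_eq_tail {C : Set N} {u v x : N} (h : G.mark v u = some Mark.tail)
    (hv : v ∉ C) : G.OpenTriple C u v x :=
  ⟨fun _ => hv, fun hc => by simp [hc.1] at h⟩

theorem cOpen_iff {C : Set N} {w : GWalk G} :
    COpen G C w ↔ w.first ∉ C ∧ w.last ∉ C ∧ w.InteriorAll (G.OpenTriple C) := Iff.rfl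

theorem inducingWalk_empty_iff {S : Set N} {w : GWalk G} :
    G.InducingWalk ∅ S w ↔ w.InteriorAll fun u v x =>
      G.IsCollider u v x ∧ v ∈ G.ancSet ({w.first, w.last} ∪ S) := by
  simp only [InducingWalk, GWalk.InteriorAll, Set.mem_empty_iff_false, false_or]
  exact ⟨fun h t h₀ h₁ => ⟨h.1 t h₀ h₁, h.2 t h₀ h₁ (h.1 t h₀ h₁)⟩,
    fun h => ⟨fun t h₀ h₁ => (h t h₀ h₁).1, fun t h₀ h₁ _ => (h t h₀ h₁).2⟩⟩

theorem mem_ancSet_of_mem {S : Set N} {x : N} (h : x ∈ S) : x ∈ G.ancSet S :=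
  ⟨x, h, .refl⟩

theorem mem_ancSet_of_anc {S : Set N} {x y : N} (hxy : G.anc x y) (hy : y ∈ G.ancSet S) :
    x ∈ G.ancSet S :=
  let ⟨s, hs, hys⟩ := hy
  ⟨s, hs, hxy.trans hys⟩

theorem ancSet_subset_ancSet {S T : Set N} (h : S ⊆ G.ancSet T) : G.ancSet S ⊆ G.ancSet T :=
  fun _ ⟨_, hs, hxs⟩ => mem_ancSet_of_anc hxs (h hs)

theorem ancSet_mono {S T : Set N} (h : S ⊆ T) : G.ancSet S ⊆ G.ancSet T :=
  fun _ ⟨s, hs, hxs⟩ => ⟨s, h hs, hxs⟩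

theorem mem_ancSet_insert {S : Set N} {x a : N} :
    x ∈ G.ancSet (insert a S) ↔ G.anc x a ∨ x ∈ G.ancSet S := by
  simp [ancSet]

theorem WF.adj_symm (hG : G.WF) : ∀ u v, G.adj u v → G.adj v u :=
  hG.2.2.2.1

theorem WF.ancSet_subset_nodes (hG : G.WF) {S : Set N} (hS : S ⊆ G.nodes) :
    G.ancSet S ⊆ G.nodes := by
  rintro x ⟨s, hs, hxs⟩
  rcases hxs.cases_head with rfl | ⟨y, hxy, -⟩
  · exact hS hs
  · exact (hG.2.2.2.2.2 x y (by simp [hxy.1])).1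

theorem WF.inputs_union_ancSet_sdiff_subset (hG : G.WF) {X : Set N} (hX : X ⊆ G.nodes)
    (S : Set N) : (G.inputs ∪ G.ancSet X) \ S ⊆ G.inputs ∪ G.outputs \ S :=
  fun _ ⟨hx, hxS⟩ => hx.elim Or.inl fun hx =>
    (hG.ancSet_subset_nodes hX hx).imp_right fun hO => ⟨hO, hxS⟩

theorem IsIADMG.dir_of_mark_ne_arrow (hG : G.IsIADMG) {u v : N} (hadj : G.adj u v)
    (h : G.mark u v ≠ some Mark.arrow) : G.dir u v := by
  rcases hG.2.1 u v hadj with h' | h' | h'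
  · exact h'
  · exact absurd h'.2 h
  · exact absurd h'.1 h

theorem IsIADMG.ancSet_subset_inputs_union (hG : G.IsIADMG) {C S : Set N}
    (hC : C ⊆ G.inputs ∪ G.ancSet S) : G.ancSet C ⊆ G.inputs ∪ G.ancSet S := by
  rintro x ⟨c, hc, hxc⟩
  rcases hC hc with hin | hS
  · rcases hxc.cases_tail with rfl | ⟨y, -, hyc⟩
    · exact Or.inl hin
    · exact absurd hyc.2 (hG.2.2.2.1 c hin y)
  · exact Or.inr (mem_ancSet_of_anc hxc hS)

theorem IsIADMG.mem_ancSet_of_dir_succ (hG : G.IsIADMG) {X : Set N} {w : GWalk G}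
    (hcol : w.InteriorAll fun u v x => G.IsCollider u v x → v ∈ G.ancSet X) {t : ℕ}
    (ht : t < w.len) (hdir : G.dir (w.f t) (w.f (t + 1))) :
    w.f t ∈ G.ancSet (insert w.last X) := by
  obtain ⟨d, hd⟩ : ∃ d, w.len = t + 1 + d := ⟨w.len - (t + 1), by omega⟩
  induction d generalizing t with
  | zero => exact mem_ancSet_of_anc (.single hdir) (mem_ancSet_of_mem (by simp [GWalk.last, hd]))
  | succ d ih =>
    refine mem_ancSet_of_anc (.single hdir) ?_
    by_cases hc : G.IsCollider (w.f t) (w.f (t + 1)) (w.f (t + 1 + 1))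
    · exact ancSet_mono (Set.subset_insert _ _)
        (hcol (t + 1) (by omega) (by omega) hc)
    · refine ih (by omega) (hG.dir_of_mark_ne_arrow (w.hadj _ (by omega)) ?_) (by omega)
      exact fun h => hc ⟨hdir.2, h⟩

theorem IsIADMG.mem_ancSet_of_dir_pred (hG : G.IsIADMG) {X : Set N} {w : GWalk G}
    (hcol : w.InteriorAll fun u v x => G.IsCollider u v x → v ∈ G.ancSet X) {t : ℕ}
    (ht₀ : 0 < t) (ht : t ≤ w.len) (hdir : G.dir (w.f t) (w.f (t - 1))) :
    w.f t ∈ G.ancSet (insert w.first X) := by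
  have hsymm := hG.1.adj_symm
  have hcol' : (w.reverse hsymm).InteriorAll fun u v x => G.IsCollider u v x → v ∈ G.ancSet X :=
    (hcol.reverse hsymm).mono fun u v x h hc => h (isCollider_comm.mp hc)
  have key := hG.mem_ancSet_of_dir_succ hcol' (t := w.len - t) (by simp; omega)
  rw [GWalk.reverse_last] at key
  simp only [GWalk.reverse, Nat.sub_sub_self ht,
    show w.len - (w.len - t + 1) = t - 1 by omega] at key
  exact key hdir

theorem IsIADMG.mem_ancSet_of_not_isCollider (hG : G.IsIADMG) {X : Set N} {w : GWalk G}
    (hcol : w.InteriorAll fun u v x => G.IsCollider u v x → v ∈ G.ancSet X) {t : ℕ}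
    (ht₀ : 0 < t) (ht : t < w.len) (hnc : ¬ G.IsCollider (w.f (t - 1)) (w.f t) (w.f (t + 1))) :
    w.f t ∈ G.ancSet (insert w.first (insert w.last X)) := by
  simp only [IsCollider, not_and_or] at hnc
  rcases hnc with h | h
  · have hadj := hG.1.adj_symm _ _ (w.hadj (t - 1) (by omega))
    rw [Nat.sub_add_cancel ht₀] at hadj
    exact ancSet_mono (Set.insert_subset_insert (Set.subset_insert _ _))
      (hG.mem_ancSet_of_dir_pred hcol ht₀ ht.le (hG.dir_of_mark_ne_arrow hadj h))
  · exact ancSet_mono (Set.subset_insert _ _)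
      (hG.mem_ancSet_of_dir_succ hcol ht (hG.dir_of_mark_ne_arrow (w.hadj t ht) h))

theorem IsIADMG.inducingWalk_of_cOpen (hG : G.IsIADMG) {S C : Set N} {w : GWalk G}
    (hw : COpen G C w)
    (hC : G.ancSet C ⊆ G.inputs ∪ G.ancSet ({w.first, w.last} ∪ S))
    (hCT : G.ancSet ({w.first, w.last} ∪ S) \ {w.first, w.last} ⊆ C)
    (hends : ∀ t, 0 < t → t < w.len → w.f t ≠ w.first ∧ w.f t ≠ w.last) :
    G.InducingWalk ∅ S w := by
  set T := G.ancSet ({w.first, w.last} ∪ S)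
  have hcol : w.InteriorAll fun u v x => G.IsCollider u v x → v ∈ T := by
    intro t h₀ h₁ hc
    rcases hC ((hw.2.2 t h₀ h₁).2 hc) with hin | hT
    · exact absurd hc.1 (hG.2.2.2.1 _ hin _)
    · exact hT
  have hTT : insert w.first (insert w.last T) ⊆ T :=
    Set.insert_subset (mem_ancSet_of_mem (by simp))
      (Set.insert_subset (mem_ancSet_of_mem (by simp)) subset_rfl)
  refine inducingWalk_empty_iff.mpr fun t h₀ h₁ => ?_
  by_cases hc : G.IsCollider (w.f (t - 1)) (w.f t) (w.f (t + 1))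
  · exact ⟨hc, hcol t h₀ h₁ hc⟩
  · have hmem : w.f t ∈ T := ancSet_subset_ancSet (fun x hx => hTT hx)
      (hG.mem_ancSet_of_not_isCollider (hcol.mono fun u v x h hc => mem_ancSet_of_mem (h hc))
        h₀ h₁ hc)
    exact absurd (hCT ⟨hmem, by simp [hends t h₀ h₁]⟩) ((hw.2.2 t h₀ h₁).1 hc)

/-- Prepend to `w` the reversal of a directed path `x → ⋯ → y`. -/
theorem exists_walk_prepend_of_anc {P : N → N → N → Prop} {x y : N}
    (hP : ∀ u v z, G.anc x v → G.mark v u = some Mark.tail → P u v z) (hxy : G.anc x y)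
    {w : GWalk G} (hw₀ : w.first = x) (hw : w.InteriorAll P) :
    ∃ w' : GWalk G, w'.first = y ∧ w'.last = w.last ∧ w'.InteriorAll P := by
  induction hxy with
  | refl => exact ⟨w, hw₀, rfl, hw⟩
  | @tail v z hxv hvz ih =>
    obtain ⟨w', h₀, h₁, hw'⟩ := ih
    have hadj : G.adj z v := by simp [adj, hvz.2]
    have hjoin : (GWalk.edge hadj).last = w'.first := h₀.symm
    refine ⟨_, rfl, by simpa using h₁, (GWalk.interiorAll_edge hadj P).append hjoin hw' ?_⟩
    exact fun _ _ => hP _ _ _ hxv hvz.1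

/-- The colliders that are ancestors of the first node but not of `C` can be removed: cut the
walk at the last of them and reach it from the first node along the reversed directed path. -/
theorem exists_walk_openTriple_of_anc_first {C : Set N} {R : N → N → N → Prop}
    {w : GWalk G} (hw : w.InteriorAll fun u v x =>
      G.OpenTriple C u v x ∨ (G.IsCollider u v x ∧ G.anc v w.first) ∨ R u v x) :
    ∃ w' : GWalk G, w'.first = w.first ∧ w'.last = w.last ∧
      w'.InteriorAll fun u v x => G.OpenTriple C u v x ∨ R u v x := by
  set bad : ℕ → Prop := fun t => 0 < t ∧ t < w.len ∧
    G.IsCollider (w.f (t - 1)) (w.f t) (w.f (t + 1)) ∧ G.anc (w.f t) w.first ∧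
      w.f t ∉ G.ancSet C
  have hgood : ∀ t, 0 < t → t < w.len → ¬ bad t →
      G.OpenTriple C (w.f (t - 1)) (w.f t) (w.f (t + 1)) ∨
        R (w.f (t - 1)) (w.f t) (w.f (t + 1)) := by
    intro t h₀ h₁ hbad
    rcases hw t h₀ h₁ with h | ⟨hc, hanc⟩ | h
    · exact Or.inl h
    · have hC : w.f t ∈ G.ancSet C := by_contra fun hC => hbad ⟨h₀, h₁, hc, hanc, hC⟩
      exact Or.inl (openTriple_of_isCollider hc hC)
    · exact Or.inr h
  by_cases hex : ∃ t, bad t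
  swap
  · push Not at hex
    exact ⟨w, rfl, rfl, fun t h₀ h₁ => hgood t h₀ h₁ (hex t)⟩
  obtain ⟨t, ht⟩ := hex
  set i := Nat.findGreatest bad w.len
  have hi : bad i := Nat.findGreatest_spec ht.2.1.le ht
  have hdrop : (w.drop i).InteriorAll fun u v x => G.OpenTriple C u v x ∨ R u v x :=
    GWalk.interiorAll_drop fun t hit ht₁ =>
      hgood t (by omega) ht₁ (Nat.findGreatest_is_greatest hit ht₁.le)
  obtain ⟨w', h₀, h₁, hw'⟩ := exists_walk_prepend_of_anc
    (fun u v z hiv hvu => Or.inl (openTriple_of_mark_eq_tail hvu fun hvC =>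
      hi.2.2.2.2 (mem_ancSet_of_anc hiv (mem_ancSet_of_mem hvC))))
    hi.2.2.2.1 rfl hdrop
  exact ⟨w', h₀, by simpa [hi.2.1.le] using h₁, hw'⟩

theorem WF.exists_cOpen_of_inducingWalk (hG : G.WF) {S C : Set N} (hSC : S ⊆ C)
    {w : GWalk G} (hw : G.InducingWalk ∅ S w) (h₀ : w.first ∉ C) (h₁ : w.last ∉ C) :
    ∃ w' : GWalk G, w'.first = w.first ∧ w'.last = w.last ∧ COpen G C w' := by
  have hsymm := hG.adj_symm
  have hw₁ : w.InteriorAll fun u v x => G.OpenTriple C u v x ∨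
      (G.IsCollider u v x ∧ G.anc v w.first) ∨ (G.IsCollider u v x ∧ G.anc v w.last) := by
    refine (inducingWalk_empty_iff.mp hw).mono fun u v x ⟨hc, hv⟩ => ?_
    simp only [Set.insert_union, Set.singleton_union, mem_ancSet_insert] at hv
    rcases hv with h | h | h
    · exact Or.inr (Or.inl ⟨hc, h⟩)
    · exact Or.inr (Or.inr ⟨hc, h⟩)
    · exact Or.inl (openTriple_of_isCollider hc (ancSet_mono hSC h))
  obtain ⟨w₂, hw₂₀, hw₂₁, hw₂⟩ := exists_walk_openTriple_of_anc_first hw₁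
  -- the same surgery at the other end, performed on the reversed walk
  have hw₂' : (w₂.reverse hsymm).InteriorAll fun u v x => G.OpenTriple C u v x ∨
      (G.IsCollider u v x ∧ G.anc v (w₂.reverse hsymm).first) ∨ False := by
    refine (hw₂.reverse hsymm).mono fun u v x h => ?_
    rw [openTriple_comm, isCollider_comm, GWalk.reverse_first, hw₂₁, or_false]
    exact h
  obtain ⟨w₃, hw₃₀, hw₃₁, hw₃⟩ := exists_walk_openTriple_of_anc_first hw₂'
  have hfirst : (w₃.reverse hsymm).first = w.first := by simp [hw₃₁, hw₂₀]
  have hlast : (w₃.reverse hsymm).last = w.last := by simp [hw₃₀, hw₂₁]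
  refine ⟨_, hfirst, hlast, cOpen_iff.mpr ⟨hfirst ▸ h₀, hlast ▸ h₁, ?_⟩⟩
  exact (hw₃.reverse hsymm).mono fun u v x h => openTriple_comm.mp (h.resolve_right id)

theorem inducingPathBtw_of_inducingWalkBtw {S : Set N} {a b : N}
    (h : G.InducingWalkBtw ∅ S a b) : G.InducingPathBtw ∅ S a b := by
  obtain ⟨w, rfl, rfl, hw⟩ := h
  obtain ⟨w', hpath, h₀, h₁, hw'⟩ := GWalk.exists_isPath_interiorAll
    (fun _ _ _ _ _ h h' => ⟨⟨h.1.1, h'.1.2⟩, h.2⟩) w (inducingWalk_empty_iff.mp hw)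
  exact ⟨w', hpath, h₀, h₁, inducingWalk_empty_iff.mpr (h₀ ▸ h₁ ▸ hw')⟩

theorem WF.not_idSepSimple_of_inducingWalkBtw (hG : G.WF) {S C : Set N} {a b : N}
    (hSC : S ⊆ C) (ha : a ∉ C) (hb : b ∉ C) (h : G.InducingWalkBtw ∅ S a b) :
    ¬ IdSepSimple G {a} {b} C := by
  obtain ⟨w, rfl, rfl, hw⟩ := h
  obtain ⟨w', h₀, h₁, hw'⟩ := hG.exists_cOpen_of_inducingWalk hSC hw ha hb
  exact fun hsep => hsep w' h₀ (Or.inl h₁) hw'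

theorem IsIADMG.inducingWalkBtw_of_not_idSepSimple (hG : G.IsIADMG) {S : Set N} {a b : N}
    (ha : a ∉ G.inputs)
    (h : ¬ IdSepSimple G {a} {b} (S ∪ ((G.inputs ∪ G.ancSet ({a, b} ∪ S)) \ {a, b}))) :
    G.InducingWalkBtw ∅ S a b := by
  set C := S ∪ ((G.inputs ∪ G.ancSet ({a, b} ∪ S)) \ {a, b})
  simp only [IdSepSimple, not_forall, not_not] at h
  obtain ⟨w, h₀, h₁, hw⟩ := h
  rw [Set.mem_singleton_iff] at h₀
  have h₁ : w.last = b := by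
    rcases h₁ with h₁ | hin
    · exact h₁
    · by_contra hne
      have hna : w.last ≠ a := fun h => ha (h ▸ hin)
      exact hw.2.1 (Or.inr ⟨Or.inl hin, by simp [hna, hne]⟩)
  obtain ⟨hw₀, hw₁, hw⟩ := cOpen_iff.mp hw
  obtain ⟨w', h₀', h₁', hw', hends⟩ := GWalk.exists_interiorAll_ne_endpoints w hw
  rw [h₀] at h₀' hw₀
  rw [h₁] at h₁' hw₁
  refine ⟨w', h₀', h₁', hG.inducingWalk_of_cOpen ⟨h₀' ▸ hw₀, h₁' ▸ hw₁, hw'⟩ ?_ ?_ hends⟩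
  · rw [h₀', h₁']
    refine hG.ancSet_subset_inputs_union ?_
    rintro x (hx | ⟨hx, -⟩)
    · exact Or.inr (mem_ancSet_of_mem (Or.inr hx))
    · exact hx
  · rw [h₀', h₁']
    exact fun x hx => Or.inr ⟨Or.inr hx.1, hx.2⟩

end MixedGraph

theorem statement1_general {N : Type} (A : SADMG N) (hA : A.WF) (a b : N)
    (ha : a ∈ A.obs) (hb : b ∈ A.graph.inputs ∪ A.obs) :
    List.TFAE
      [ A.graph.InducingPathBtw ∅ A.sel a b,
        A.graph.InducingWalkBtw ∅ A.sel a b,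
        ∀ Z : Set N, Z ⊆ (A.graph.inputs ∪ A.obs) \ {a, b} →
          ¬ IdSepSimple A.graph {a} {b} (A.sel ∪ Z),
        ¬ IdSepSimple A.graph {a} {b}
          (A.sel ∪ ((A.graph.inputs ∪ A.graph.ancSet ({a, b} ∪ A.sel)) \ {a, b})) ] := by
  obtain ⟨hG, hSO⟩ := hA
  have haI : a ∉ A.graph.inputs := fun h => Set.disjoint_left.mp hG.1.1 h ha.1
  have hbS : b ∉ A.sel := by
    rcases hb with h | h
    · exact fun hS => Set.disjoint_left.mp hG.1.1 h (hSO hS)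
    · exact h.2
  have hnodes : {a, b} ∪ A.sel ⊆ A.graph.nodes := by
    rintro x ((rfl | rfl) | hx)
    exacts [Or.inr ha.1, hb.imp_right (·.1), Or.inr (hSO hx)]
  tfae_have 1 → 2 := fun ⟨w, _, hw⟩ => ⟨w, hw⟩
  tfae_have 2 → 1 := MixedGraph.inducingPathBtw_of_inducingWalkBtw
  tfae_have 2 → 3 := fun h Z hZ =>
    hG.1.not_idSepSimple_of_inducingWalkBtw Set.subset_union_left
      (by rintro (h | h); exacts [ha.2 h, (hZ h).2 (by simp)])
      (by rintro (h | h); exacts [hbS h, (hZ h).2 (by simp)]) h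
  tfae_have 3 → 4 := by
    intro h
    rw [← Set.union_sdiff_self]
    exact h _ fun x ⟨⟨hx, hxab⟩, hxS⟩ =>
      ⟨hG.1.inputs_union_ancSet_sdiff_subset hnodes _ ⟨hx, hxS⟩, hxab⟩
  tfae_have 4 → 2 := hG.inducingWalkBtw_of_not_idSepSimple haI
  tfae_finish

/-- For an isADMG `A = (I,O,S,E)` and distinct `a ∈ O`,
`b ∈ I ∪ O`, the following are equivalent: (1) there is an `S`-inducing path from
`a` to `b`; (2) there is an `S`-inducing walk from `a` to `b`; (3) for every
`Z ⊆ (I ∪ O) \ {a,b}`, `a` is not id-separated from `b` given `S ∪ Z` in `A`;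
(4) the same for `Z = (I ∪ Anc_A({a,b} ∪ S)) \ {a,b}`. -/
theorem statement1 {N : Type} (A : SADMG N) (hA : A.WF) (a b : N)
    (ha : a ∈ A.obs) (hb : b ∈ A.graph.inputs ∪ A.obs) (hab : a ≠ b) :
    List.TFAE
      [ A.graph.InducingPathBtw ∅ A.sel a b,
        A.graph.InducingWalkBtw ∅ A.sel a b,
        ∀ Z : Set N, Z ⊆ (A.graph.inputs ∪ A.obs) \ {a, b} →
          ¬ IdSepSimple A.graph {a} {b} (A.sel ∪ Z),
        ¬ IdSepSimple A.graph {a} {b}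
          (A.sel ∪ ((A.graph.inputs ∪ A.graph.ancSet ({a, b} ∪ A.sel)) \ {a, b})) ] :=
  statement1_general A hA a b ha hb

end
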